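/- arXiv:2409.10097 — 5 statements merged into one kernel-verified Lean document; each statement's English description precedes it below -/
import Mathlib

section
/- In the complex numbers, the difference of series ∑_{n=0}^∞ (1/(2n+1))·(1/(1−2i))^{2n+1} − ∑_{n=0}^∞ (1/(2n+1))·(1/(1+2i))^{2n+1} equals πi/4, where i = √−1. -/
open Complex

/-! With `a = 1 / (1 - 2i)`, both sums are values of `∑ z^(2n+1)/(2n+1) = ½ log ((1 + z)/(1 - z))`
(obtained from the arctangent series at `-iz`), at `a` and at `ā = 1 / (1 + 2i)`. The Möbius
map sends these to `1 + i` and `1 - i`, so the difference is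
`½ (log (1 + i) - log (1 - i)) = i · arg (1 + i) = πi/4`. -/

open scoped ComplexConjugate

namespace Complex

theorem hasSum_half_log_div_of_norm_lt_one {z : ℂ} (hz : ‖z‖ < 1) :
    HasSum (fun n : ℕ => 1 / (2 * (n : ℂ) + 1) * z ^ (2 * n + 1))
      (log ((1 + z) / (1 - z)) / 2) := by
  have hterm (n : ℕ) : I * ((-1) ^ n * (-I * z) ^ (2 * n + 1) / ↑(2 * n + 1))
      = 1 / (2 * (n : ℂ) + 1) * z ^ (2 * n + 1) := by
    rw [mul_pow, pow_succ, pow_mul, neg_sq, I_sq]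
    have hsq : ((-1 : ℂ) ^ n) * (-1) ^ n = 1 := by rw [← mul_pow]; norm_num
    push_cast
    linear_combination (-(((-1 : ℂ) ^ n) ^ 2 * z ^ (2 * n + 1) / (2 * n + 1))) * I_mul_I
      + (z ^ (2 * n + 1) / (2 * n + 1)) * hsq
  have hval : I * arctan (-I * z) = log ((1 + z) / (1 - z)) / 2 := by
    rw [Complex.arctan, show -I * z * I = z by linear_combination (-z) * I_mul_I]
    linear_combination (-(log ((1 + z) / (1 - z)) / 2)) * I_mul_I
  simpa only [hterm, hval] using (hasSum_arctan (z := -I * z) (by simpa using hz)).mul_left I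

theorem log_sub_log_conj {z : ℂ} (h : arg z ≠ Real.pi) :
    log z - log (conj z) = 2 * arg z * I := by
  rw [log_conj z h, sub_conj, log_im, ofReal_mul, ofReal_ofNat]

theorem arg_one_add_I : arg (1 + I) = Real.pi / 4 := by
  have h := arg_cos_add_sin_mul_I (θ := Real.pi / 4)
    ⟨by linarith [Real.pi_pos], by linarith [Real.pi_pos]⟩
  rw [← ofReal_cos, ← ofReal_sin, Real.cos_pi_div_four, Real.sin_pi_div_four,
    show ((√2 / 2 : ℝ) : ℂ) + ((√2 / 2 : ℝ) : ℂ) * I = ((√2 / 2 : ℝ) : ℂ) * (1 + I) by ring,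
    arg_real_mul _ (by positivity)] at h
  exact h

theorem norm_one_div_lt_one_of_one_lt_abs_im {w : ℂ} (hw : 1 < |w.im|) : ‖1 / w‖ < 1 := by
  have hpos : 0 < ‖w‖ := one_pos.trans (hw.trans_le (abs_im_le_norm w))
  rw [norm_div, norm_one, div_lt_one hpos]
  exact hw.trans_le (abs_im_le_norm w)

end Complex

theorem pi_base5_series :
    (∑' n : ℕ, (1 / (2 * (n : ℂ) + 1)) * (1 / (1 - 2 * Complex.I)) ^ (2 * n + 1))
      - (∑' n : ℕ, (1 / (2 * (n : ℂ) + 1)) * (1 / (1 + 2 * Complex.I)) ^ (2 * n + 1))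
      = Real.pi * Complex.I / 4 := by
  have hsub : (1 + 1 / (1 - 2 * I)) / (1 - 1 / (1 - 2 * I)) = 1 + I := by
    have : 1 - 2 * I ≠ 0 := by simp [Complex.ext_iff]
    rw [div_eq_iff (by field_simp; simp [Complex.ext_iff])]
    field_simp
    linear_combination (2 : ℂ) * I_mul_I
  have hadd : (1 + 1 / (1 + 2 * I)) / (1 - 1 / (1 + 2 * I)) = conj (1 + I) := by
    have : 1 + 2 * I ≠ 0 := by simp [Complex.ext_iff]
    rw [map_add, map_one, conj_I, div_eq_iff (by field_simp; simp [Complex.ext_iff])]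
    field_simp
    linear_combination (2 : ℂ) * I_mul_I
  have harg : arg (1 + I) ≠ Real.pi := by
    rw [arg_one_add_I]
    linarith [Real.pi_pos]
  have hseries (w : ℂ) (hw : 1 < |w.im|) :=
    (hasSum_half_log_div_of_norm_lt_one (norm_one_div_lt_one_of_one_lt_abs_im hw)).tsum_eq
  rw [hseries (1 - 2 * I) (by simp), hseries (1 + 2 * I) (by simp),
    hsub, hadd, ← sub_div, log_sub_log_conj harg, arg_one_add_I]
  push_cast
  ring
end

section
/- Let (b_n)_{n≥0} be the integer sequence defined by b_0 = 1, b_1 = −1 and b_n = −6·b_{n−1} − 25·b_{n−2} for n ≥ 2. Then |b_n| < 2·5^n for all n ≥ 0. -/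
theorem abs_b_lt (b : ℕ → ℤ) (hb0 : b 0 = 1) (hb1 : b 1 = -1)
    (hrec : ∀ n : ℕ, 2 ≤ n → b n = -6 * b (n - 1) - 25 * b (n - 2)) :
    ∀ n : ℕ, |b n| < 2 * 5 ^ n := by
  -- companion sequence
  let v : ℕ → ℤ := fun n => Nat.rec (-1) (fun k vk => 8 * b k - 3 * vk) n
  have hv0 : v 0 = -1 := rfl
  have hvs : ∀ n, v (n + 1) = 8 * b n - 3 * v n := fun n => rfl
  have key : ∀ n, 2 * b (n + 1) = -6 * b n - 4 * v n ∧
      (2 * b n) ^ 2 + (v n) ^ 2 = 5 ^ (2 * n + 1) := by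
    intro n
    induction n with
    | zero => constructor <;> simp [hb0, hb1, hv0]
    | succ k ih =>
      obtain ⟨ih1, ih2⟩ := ih
      have hr : b (k + 1 + 1) = -6 * b (k + 1) - 25 * b k := by
        have h := hrec (k + 2) (by omega)
        have h1 : k + 2 - 1 = k + 1 := by omega
        have h2 : k + 2 - 2 = k := by omega
        rw [h1, h2] at h
        exact h
      constructor
      · rw [hvs]; linarith
      · rw [hvs]
        have heq : (2 * b (k + 1)) ^ 2 + (8 * b k - 3 * v k) ^ 2 =
            25 * ((2 * b k) ^ 2 + (v k) ^ 2) := by rw [ih1]; ring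
        rw [heq, ih2, show 2 * (k + 1) + 1 = (2 * k + 1) + 2 from by ring]
        ring
  intro n
  have h := (key n).2
  have h5 : (0:ℤ) < 5 ^ n := pow_pos (by norm_num) n
  have h52 : (5:ℤ) ^ (2 * n + 1) = 5 * (5 ^ n) ^ 2 := by
    rw [← pow_mul]; ring
  rw [abs_lt]
  constructor <;> nlinarith [sq_nonneg (v n), sq_nonneg (b n + 2 * 5 ^ n), sq_nonneg (b n - 2 * 5 ^ n)]
end

section
/- For all integers d ≥ 0 and r ≥ 1, the complex number 8·5^d·∑_{n=d+2r}^∞ (1/(2n+1))·(1/(1−2i))^{2n+1} has absolute value at most 2·5^{1/2−2r}/(2d + 4r + 1). -/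
/-!
With `z = 1 / (1 - 2i)` and `m = d + 2r`, the `n`-th tail term has norm at most
`‖z‖ ^ (2m+1) / (2m+1) * (‖z‖²) ^ n`, so the tail is bounded by a geometric series with ratio
`‖z‖² = 1/5`. Its sum `5/4 * 5 ^ (-(2m+1)/2) / (2m+1)`, multiplied by `8 * 5 ^ d`, is exactly the
claimed bound.
-/

open Complex

lemma norm_tsum_odd_pow_div_le {𝕜 : Type*} [RCLike 𝕜] {z : 𝕜} (hz : ‖z‖ < 1) (m : ℕ) :
    ‖∑' n : ℕ, (1 / (2 * ((n + m : ℕ) : 𝕜) + 1)) * z ^ (2 * (n + m) + 1)‖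
      ≤ ‖z‖ ^ (2 * m + 1) / ((2 * m + 1) * (1 - ‖z‖ ^ 2)) := by
  have hq : ‖z‖ ^ 2 < 1 := pow_lt_one₀ (norm_nonneg z) hz two_ne_zero
  have hgeo := (hasSum_geometric_of_lt_one (by positivity) hq).mul_left
    (‖z‖ ^ (2 * m + 1) / (2 * m + 1))
  refine tsum_of_norm_bounded (by rwa [← div_eq_mul_inv, div_div] at hgeo) fun n => ?_
  have hpow : ‖z‖ ^ (2 * (n + m) + 1) = ‖z‖ ^ (2 * m + 1) * (‖z‖ ^ 2) ^ n := by
    rw [← pow_mul, ← pow_add]; ring_nf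
  have hden : (1 : ℝ) / (2 * (n + m : ℕ) + 1) ≤ 1 / (2 * m + 1) :=
    one_div_le_one_div_of_le (by positivity) (by push_cast; linarith [n.cast_nonneg (α := ℝ)])
  calc ‖(1 / (2 * ((n + m : ℕ) : 𝕜) + 1)) * z ^ (2 * (n + m) + 1)‖
      = 1 / (2 * (n + m : ℕ) + 1) * (‖z‖ ^ (2 * m + 1) * (‖z‖ ^ 2) ^ n) := by
        rw [norm_mul, norm_pow, hpow, norm_div, norm_one]
        norm_cast
    _ ≤ 1 / (2 * m + 1) * (‖z‖ ^ (2 * m + 1) * (‖z‖ ^ 2) ^ n) := by gcongr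
    _ = ‖z‖ ^ (2 * m + 1) / (2 * m + 1) * (‖z‖ ^ 2) ^ n := by ring

lemma norm_one_div_one_sub_two_mul_I : ‖1 / (1 - 2 * I)‖ = (5 : ℝ) ^ (-(1 / 2) : ℝ) := by
  rw [norm_div, norm_one, Complex.norm_def, Real.rpow_neg (by norm_num), ← Real.sqrt_eq_rpow,
    one_div]
  norm_num [Complex.normSq_apply]

lemma eight_mul_five_pow_mul_tail_bound_eq (d r : ℕ) :
    8 * 5 ^ d * (((5 : ℝ) ^ (-(1 / 2) : ℝ)) ^ (2 * (d + 2 * r) + 1)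
      / ((2 * ((d + 2 * r : ℕ) : ℝ) + 1) * (1 - ((5 : ℝ) ^ (-(1 / 2) : ℝ)) ^ 2)))
      = 2 * (5 : ℝ) ^ ((1 : ℝ) / 2 - 2 * r) / (2 * d + 4 * r + 1) := by
  have h5 : (0 : ℝ) < 5 := by norm_num
  have hsq : ((5 : ℝ) ^ (-(1 / 2) : ℝ)) ^ 2 = 1 / 5 := by
    rw [← Real.rpow_mul_natCast h5.le]; norm_num
  have hexp : (5 : ℝ) ^ d * 5 * ((5 : ℝ) ^ (-(1 / 2) : ℝ)) ^ (2 * (d + 2 * r) + 1)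
      = (5 : ℝ) ^ ((1 : ℝ) / 2 - 2 * r) := by
    rw [← Real.rpow_natCast, ← Real.rpow_add_one h5.ne', ← Real.rpow_mul_natCast h5.le,
      ← Real.rpow_add h5]
    congr 1; push_cast; ring
  rw [hsq, ← hexp]
  push_cast
  field_simp
  ring

theorem complex_tail_bound_general (d r : ℕ) :
    ‖(8 * 5 ^ d *
        ∑' n : ℕ, (1 / (2 * ((n + d + 2 * r : ℕ) : ℂ) + 1))
          * (1 / (1 - 2 * Complex.I)) ^ (2 * (n + d + 2 * r) + 1))‖
      ≤ 2 * (5 : ℝ) ^ ((1 : ℝ) / 2 - 2 * r) / (2 * d + 4 * r + 1) := by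
  set z : ℂ := 1 / (1 - 2 * I)
  have hz : ‖z‖ = (5 : ℝ) ^ (-(1 / 2) : ℝ) := norm_one_div_one_sub_two_mul_I
  have hz_lt_one : ‖z‖ < 1 := hz ▸ Real.rpow_lt_one_of_one_lt_of_neg (by norm_num) (by norm_num)
  calc _ = 8 * 5 ^ d * ‖∑' n : ℕ, (1 / (2 * ((n + d + 2 * r : ℕ) : ℂ) + 1))
          * z ^ (2 * (n + d + 2 * r) + 1)‖ := by norm_num
    _ ≤ 8 * 5 ^ d * (‖z‖ ^ (2 * (d + 2 * r) + 1)
          / ((2 * ((d + 2 * r : ℕ) : ℝ) + 1) * (1 - ‖z‖ ^ 2))) := by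
      gcongr
      simpa only [← add_assoc] using norm_tsum_odd_pow_div_le hz_lt_one (d + 2 * r)
    _ = _ := by rw [hz]; exact eight_mul_five_pow_mul_tail_bound_eq d r

theorem complex_tail_bound (d r : ℕ) (hr : 1 ≤ r) :
    ‖(8 * 5 ^ d *
        ∑' n : ℕ, (1 / (2 * ((n + d + 2 * r : ℕ) : ℂ) + 1))
          * (1 / (1 - 2 * Complex.I)) ^ (2 * (n + d + 2 * r) + 1))‖
      ≤ 2 * (5 : ℝ) ^ ((1 : ℝ) / 2 - 2 * r) / (2 * d + 4 * r + 1) :=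
  complex_tail_bound_general d r
end

section
/- Let d, n, k be natural numbers and m a positive integer coprime to 5 with 2n+1 = 5^k·m, and suppose 2n+1 > d − k. Consider the complex number ζ = 8·5^d / ((2n+1)·(1−2i)^{2n+1}). Then 5^{2n+1+k−d}·m·ζ is (the image in ℂ of) a Gaussian integer, but 5^{2n+k−d}·m·ζ is not; in other words, the exact denominator of ζ as an element of ℚ(i) is 5^{2n+1−d+k}·m. -/
open GaussianInt

lemma prime_p : Prime (⟨1, -2⟩ : GaussianInt) := by
  rw [← UniqueFactorizationMonoid.irreducible_iff_prime]
  constructor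
  · rw [← Zsqrtd.norm_eq_one_iff]; decide
  · intro a b hab
    have hn : a.norm.natAbs * b.norm.natAbs = 5 := by
      rw [← Int.natAbs_mul, ← Zsqrtd.norm_mul, ← hab]; decide
    rcases (Nat.Prime.eq_one_or_self_of_dvd (by norm_num) _ ⟨_, hn.symm⟩) with h | h
    · exact Or.inl (Zsqrtd.norm_eq_one_iff.mp h)
    · exact Or.inr (Zsqrtd.norm_eq_one_iff.mp (by rw [h] at hn; omega))

theorem exact_denominator (d n k : ℕ) (m : ℕ) (hm : 0 < m) (hcop : Nat.Coprime m 5)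
    (hfact : 2 * n + 1 = 5 ^ k * m) (hd : d < 2 * n + 1 + k) :
    (∃ z : GaussianInt,
        (5 : ℂ) ^ (2 * n + 1 + k - d) * m *
            (8 * 5 ^ d / ((2 * (n : ℂ) + 1) * (1 - 2 * Complex.I) ^ (2 * n + 1)))
          = GaussianInt.toComplex z) ∧
      ¬ (∃ z : GaussianInt,
        (5 : ℂ) ^ (2 * n + k - d) * m *
            (8 * 5 ^ d / ((2 * (n : ℂ) + 1) * (1 - 2 * Complex.I) ^ (2 * n + 1)))
          = GaussianInt.toComplex z) := by
  have h5 : (1 - 2 * Complex.I) * (1 + 2 * Complex.I) = 5 := by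
    have h := Complex.I_sq
    calc (1 - 2 * Complex.I) * (1 + 2 * Complex.I) = 1 - 4 * Complex.I ^ 2 := by ring
    _ = 5 := by rw [h]; ring
  have hI : (1 - 2 * Complex.I) ≠ 0 := by
    intro h0
    rw [h0, zero_mul] at h5
    norm_num at h5
  have hN : (2 * (n : ℂ) + 1) ≠ 0 := by
    have : ((2 * n + 1 : ℕ) : ℂ) ≠ 0 := Nat.cast_ne_zero.mpr (by omega)
    push_cast at this
    exact this
  have hD : (2 * (n : ℂ) + 1) * (1 - 2 * Complex.I) ^ (2 * n + 1) ≠ 0 :=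
    mul_ne_zero hN (pow_ne_zero _ hI)
  have hq : (2 * (n : ℂ) + 1) = 5 ^ k * m := by
    have := congrArg (Nat.cast : ℕ → ℂ) hfact
    push_cast at this
    exact this
  set w : GaussianInt := 8 * (⟨1, 2⟩ : GaussianInt) ^ (2 * n + 1) with hw
  have hwc : GaussianInt.toComplex w = 8 * (1 + 2 * Complex.I) ^ (2 * n + 1) := by
    rw [hw, map_mul, map_pow]
    norm_num [GaussianInt.toComplex_def]
  have hpow : ((1:ℂ) + 2 * Complex.I) ^ (2 * n + 1) * (1 - 2 * Complex.I) ^ (2 * n + 1)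
      = 5 ^ (2 * n + 1) := by rw [← mul_pow, mul_comm, h5]
  have hA : (2 * n + 1 + k - d) + d = 2 * n + 1 + k := by omega
  have e1 : (5:ℂ) ^ (2 * n + 1 + k - d) * (5:ℂ) ^ d = 5 ^ (2 * n + 1) * 5 ^ k := by
    rw [← pow_add, hA, pow_add]
  have hkey : (5 : ℂ) ^ (2 * n + 1 + k - d) * m *
      (8 * 5 ^ d / ((2 * (n : ℂ) + 1) * (1 - 2 * Complex.I) ^ (2 * n + 1)))
      = GaussianInt.toComplex w := by
    rw [hwc, mul_div_assoc', div_eq_iff hD, hq]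
    calc (5:ℂ) ^ (2 * n + 1 + k - d) * m * (8 * 5 ^ d)
        = 8 * m * ((5:ℂ) ^ (2 * n + 1 + k - d) * 5 ^ d) := by ring
      _ = 8 * m * ((5:ℂ) ^ (2 * n + 1) * 5 ^ k) := by rw [e1]
      _ = 8 * m * 5 ^ k * ((1 + 2 * Complex.I) ^ (2 * n + 1) * (1 - 2 * Complex.I) ^ (2 * n + 1)) := by
          rw [hpow]; ring
      _ = 8 * (1 + 2 * Complex.I) ^ (2 * n + 1) * (5 ^ k * m * (1 - 2 * Complex.I) ^ (2 * n + 1)) := by ring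
  refine ⟨⟨w, hkey⟩, ?_⟩
  rintro ⟨z, hz⟩
  have hAB : 2 * n + 1 + k - d = (2 * n + k - d) + 1 := by omega
  have hc : (5 : ℂ) * GaussianInt.toComplex z = GaussianInt.toComplex w := by
    rw [← hz, ← hkey, hAB, pow_succ]
    ring
  have hzw : (5 : GaussianInt) * z = w := by
    apply GaussianInt.toComplex_inj.mp
    have h5c : GaussianInt.toComplex 5 = 5 := by
      rw [show (5 : GaussianInt) = ⟨5, 0⟩ by decide, GaussianInt.toComplex_def']
      norm_num
    rw [map_mul, h5c, hc]
  have h5g : (5 : GaussianInt) = ⟨1, -2⟩ * ⟨1, 2⟩ := by decide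
  have hdvd : (⟨1, -2⟩ : GaussianInt) ∣ 8 * (⟨1, 2⟩ : GaussianInt) ^ (2 * n + 1) := by
    refine ⟨⟨1, 2⟩ * z, ?_⟩
    rw [← hw, ← hzw, h5g]; ring
  rcases (prime_p.dvd_mul).mp hdvd with h8 | hq2
  · obtain ⟨c, hc8⟩ := h8
    rw [Zsqrtd.ext_iff] at hc8
    simp [Zsqrtd.re_mul, Zsqrtd.im_mul] at hc8
    omega
  · obtain ⟨c, hc2⟩ := prime_p.dvd_of_dvd_pow hq2
    rw [Zsqrtd.ext_iff] at hc2
    simp [Zsqrtd.re_mul, Zsqrtd.im_mul] at hc2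
    omega
end

section
/- Let d, n, k be natural numbers and m a positive integer coprime to 5 with 2n+1 = 5^k·m, and suppose d − k ≥ 2n+1. Let c ∈ ℤ[i] satisfy c·(1−2i)^{2n+1} ≡ 8·5^{d−k} (mod m·ℤ[i]). Then the complex number 8·5^d/((2n+1)·(1−2i)^{2n+1}) − c/m is (the image in ℂ of) a Gaussian integer; equivalently, 8·5^d/((2n+1)·(1−2i)^{2n+1}) ≡ c/m modulo ℤ[i]. -/
/-!
Put `α = 1 - 2i`, `N = 2n + 1` and `w = (c α^N - 8·5^(d-k)) / m`. Since `N = 5^k m`, the number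
in question equals `-w / α^N`, so it suffices that `α^N ∣ w` in `ℤ[i]`. Now `α ∣ 5`, hence `α^N`
divides `5^(d-k)` as `d - k ≥ N`, and therefore divides `c α^N - 8·5^(d-k) = m w`; as `5` is
coprime to `m`, so is `α^N`, and `α^N ∣ w`.
-/

open GaussianInt

namespace GaussianInt

theorem one_sub_two_sqrtd_dvd_five : (1 - 2 * Zsqrtd.sqrtd : GaussianInt) ∣ 5 :=
  ⟨1 + 2 * Zsqrtd.sqrtd, by ext <;> simp⟩

theorem isCoprime_one_sub_two_sqrtd_natCast {m : ℕ} (hm : m.Coprime 5) :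
    IsCoprime (1 - 2 * Zsqrtd.sqrtd : GaussianInt) m := by
  have h5 : IsCoprime (5 : GaussianInt) m := by simpa using (hm.cast (R := GaussianInt)).symm
  exact h5.of_isCoprime_of_dvd_left one_sub_two_sqrtd_dvd_five

theorem toComplex_one_sub_two_sqrtd :
    toComplex (1 - 2 * Zsqrtd.sqrtd) = 1 - 2 * Complex.I := by
  simp [toComplex_def, sub_eq_add_neg]

end GaussianInt

theorem div_mul_sub_div_eq_neg_of_sub_eq_mul {K : Type*} [Field K] {a c e m s : K}
    (ha : a ≠ 0) (hm : m ≠ 0) (hs : c * a - e = a * m * s) :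
    e / (m * a) - c / m = -s := by
  field_simp
  linear_combination -hs

theorem bbp_term_congruence (d n k : ℕ) (m : ℕ) (hm : 0 < m) (hcop : Nat.Coprime m 5)
    (hfact : 2 * n + 1 = 5 ^ k * m) (hd : 2 * n + 1 + k ≤ d)
    (c : GaussianInt)
    (hc : (m : GaussianInt) ∣
      c * (1 - 2 * Zsqrtd.sqrtd) ^ (2 * n + 1) - 8 * 5 ^ (d - k)) :
    ∃ z : GaussianInt,
      8 * 5 ^ d / ((2 * (n : ℂ) + 1) * (1 - 2 * Complex.I) ^ (2 * n + 1))
          - GaussianInt.toComplex c / m = GaussianInt.toComplex z := by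
  set α : GaussianInt := 1 - 2 * Zsqrtd.sqrtd
  have hα5 : α ^ (2 * n + 1) ∣ 5 ^ (d - k) :=
    (pow_dvd_pow_of_dvd one_sub_two_sqrtd_dvd_five _).trans
      (pow_dvd_pow 5 (by omega))
  obtain ⟨s, hs⟩ : α ^ (2 * n + 1) * m ∣ c * α ^ (2 * n + 1) - 8 * 5 ^ (d - k) :=
    ((isCoprime_one_sub_two_sqrtd_natCast hcop).pow_left).mul_dvd
      (dvd_sub (dvd_mul_left _ _) (hα5.mul_left 8)) hc
  refine ⟨-s, ?_⟩
  have hN : (2 * (n : ℂ) + 1) = 5 ^ k * m := by exact_mod_cast hfact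
  have h5d : (5 : ℂ) ^ d = 5 ^ k * 5 ^ (d - k) := by rw [← pow_add]; congr 1; omega
  rw [hN, h5d, mul_assoc, mul_left_comm, mul_div_mul_left _ _ (by norm_num), map_neg]
  refine div_mul_sub_div_eq_neg_of_sub_eq_mul (pow_ne_zero _ ?_) (by exact_mod_cast hm.ne') ?_
  · intro h; simpa using congrArg Complex.re h
  · simpa [α, toComplex_one_sub_two_sqrtd, map_ofNat] using congrArg toComplex hs
end
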